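/- arXiv:math/0510110 — 3 statements merged into one kernel-verified Lean document; each statement's English description precedes it below -/
import Mathlib

section
/- Let K be a field of characteristic different from 2, let B and B' be one-dimensional K-vector spaces, and let V₁ and V₂ be two-dimensional K-vector spaces. Fix a K-linear isomorphism ι : B ⊗ B' ≅ ⋀²V₁ ⊗ ⋀²V₂. Let t : B ⊕ B' → V₁ ⊗ V₂ be a K-linear map such that for all b ∈ B and b' ∈ B' one has β(t(b), t(b)) = 0, β(t(b'), t(b')) = 0, and β(t(b), t(b')) = ι(b ⊗ b'). Then there exist unique one-dimensional subspaces U₁, U₁' of V₁ with V₁ = U₁ ⊕ U₁' and unique one-dimensional subspaces U₂, U₂' of V₂ with V₂ = U₂ ⊕ U₂' such that t(B) equals the subspace U₁⊗U₂ of V₁ ⊗ V₂ (the image of the natural map U₁ ⊗ U₂ → V₁ ⊗ V₂) and t(B') equals the subspace U₁'⊗U₂'; moreover t restricts to isomorphisms B ≅ U₁⊗U₂ and B' ≅ U₁'⊗U₂', so that t is identified with the natural inclusion (U₁⊗U₂) ⊕ (U₁'⊗U₂') ↪ V₁ ⊗ V₂. -/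
open TensorProduct

set_option synthInstance.maxHeartbeats 1000000
set_option maxHeartbeats 1000000

/-- The wedge product of two vectors, as an element of the second exterior power. -/
noncomputable def wedge2 {K V : Type*} [Field K] [AddCommGroup V] [Module K V] (v w : V) :
    ⋀[K]^2 V :=
  ⟨ExteriorAlgebra.ιMulti K 2 ![v, w], ExteriorAlgebra.ιMulti_range K 2 ⟨![v, w], rfl⟩⟩

/-- The subspace `p ⊗ q` of `M ⊗ N` attached to subspaces `p ⊆ M`, `q ⊆ N`: the image of the
natural map `p ⊗ q → M ⊗ N`. -/
noncomputable def tensorSub {K M N : Type*} [Field K] [AddCommGroup M] [Module K M]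
    [AddCommGroup N] [Module K N] (p : Submodule K M) (q : Submodule K N) :
    Submodule K (M ⊗[K] N) :=
  LinearMap.range (TensorProduct.map p.subtype q.subtype)

section Helpers

variable {K V : Type*} [Field K] [AddCommGroup V] [Module K V]

lemma wedge2_val (v w : V) :
    ((wedge2 v w : ⋀[K]^2 V) : ExteriorAlgebra K V)
      = ExteriorAlgebra.ι K v * ExteriorAlgebra.ι K w := by
  show ExteriorAlgebra.ιMulti K 2 ![v, w] = _
  rw [ExteriorAlgebra.ιMulti_succ_apply, ExteriorAlgebra.ιMulti_succ_apply,
    ExteriorAlgebra.ιMulti_zero_apply]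
  simp [Matrix.vecTail]

lemma wedge2_self (v : V) : wedge2 (K := K) v v = 0 := by
  apply Subtype.ext
  rw [wedge2_val]
  simpa using ExteriorAlgebra.ι_sq_zero (R := K) v

lemma wedge2_add_left (u v w : V) :
    wedge2 (K := K) (u + v) w = wedge2 u w + wedge2 v w := by
  apply Subtype.ext
  push_cast [wedge2_val]
  rw [map_add, add_mul]

lemma wedge2_add_right (u v w : V) :
    wedge2 (K := K) u (v + w) = wedge2 u v + wedge2 u w := by
  apply Subtype.ext
  push_cast [wedge2_val]
  rw [map_add, mul_add]

lemma wedge2_smul_left (c : K) (v w : V) :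
    wedge2 (K := K) (c • v) w = c • wedge2 v w := by
  apply Subtype.ext
  push_cast [wedge2_val]
  rw [map_smul, smul_mul_assoc]

lemma wedge2_smul_right (c : K) (v w : V) :
    wedge2 (K := K) v (c • w) = c • wedge2 v w := by
  apply Subtype.ext
  push_cast [wedge2_val]
  rw [map_smul, mul_smul_comm]

lemma wedge2_anticomm (v w : V) : wedge2 (K := K) w v = - wedge2 v w := by
  have h := wedge2_self (K := K) (v + w)
  rw [wedge2_add_left, wedge2_add_right, wedge2_add_right, wedge2_self, wedge2_self] at h
  have : wedge2 (K := K) v w + wedge2 w v = 0 := by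
    rw [← h]; abel
  linear_combination (norm := abel) this

lemma wedge2_zero_left (w : V) : wedge2 (K := K) 0 w = 0 := by
  simpa using wedge2_smul_left (K := K) 0 0 w

lemma wedge2_zero_right (v : V) : wedge2 (K := K) v 0 = 0 := by
  simpa using wedge2_smul_right (K := K) 0 v 0
variable {K V : Type*} [Field K] [AddCommGroup V] [Module K V]

noncomputable def detF (e : Module.Basis (Fin 2) K V) : ∀ i : ℕ, V [⋀^Fin i]→ₗ[K] K
  | 2 => e.det
  | _ => 0

lemma wedge2_basis_ne_zero (e : Module.Basis (Fin 2) K V) : wedge2 (K := K) (e 0) (e 1) ≠ 0 := by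
  intro h
  have h1 : ExteriorAlgebra.ιMulti K 2 ![e 0, e 1] = 0 := by
    have h0 : ((wedge2 (e 0) (e 1) : ⋀[K]^2 V) : ExteriorAlgebra K V) = 0 := by rw [h]; rfl
    exact h0
  have h2 : detF e 2 ![e 0, e 1] = 0 := by
    rw [← ExteriorAlgebra.liftAlternating_apply_ιMulti, h1, _root_.map_zero]
  have h3 : detF e 2 ![e 0, e 1] = e.det ![e 0, e 1] := rfl
  have h4 : ![e 0, e 1] = ⇑e := by funext i; fin_cases i <;> rfl
  rw [h3, h4, e.det_self] at h2
  exact one_ne_zero h2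

lemma exists_dual_one (K : Type*) {V : Type*} [Field K] [AddCommGroup V] [Module K V] (x : V) (hx : x ≠ 0) : ∃ φ : V →ₗ[K] K, φ x = 1 := by
  obtain ⟨q, hq⟩ := Submodule.exists_isCompl (K ∙ x)
  refine ⟨((LinearEquiv.toSpanNonzeroSingleton K V x hx).symm : (K ∙ x) →ₗ[K] K) ∘ₗ
    (K ∙ x).linearProjOfIsCompl q hq, ?_⟩
  have hmem : x ∈ K ∙ x := Submodule.mem_span_singleton_self x
  have h1 : (K ∙ x).linearProjOfIsCompl q hq x = ⟨x, hmem⟩ :=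
    Submodule.linearProjOfIsCompl_apply_left hq ⟨x, hmem⟩
  simp only [LinearMap.comp_apply, h1]
  have : LinearEquiv.toSpanNonzeroSingleton K V x hx 1 = ⟨x, hmem⟩ := by
    apply Subtype.ext
    simp [LinearEquiv.toSpanNonzeroSingleton_one]
  rw [← this, LinearEquiv.coe_coe, LinearEquiv.symm_apply_apply]

variable {W : Type*} [AddCommGroup W] [Module K W]

lemma tmul_ne_zero' {x : V} {y : W} (hx : x ≠ 0) (hy : y ≠ 0) : x ⊗ₜ[K] y ≠ 0 := by
  obtain ⟨φ, hφ⟩ := exists_dual_one K x hx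
  obtain ⟨ψ, hψ⟩ := exists_dual_one K y hy
  intro h
  have := congrArg (TensorProduct.lift (((LinearMap.mul K K).comp φ).compl₂ ψ : V →ₗ[K] W →ₗ[K] K)) h
  rw [TensorProduct.lift.tmul, map_zero] at this
  simp [hφ, hψ] at this


lemma tensorSub_span (a : V) (b : W) :
    tensorSub (K ∙ a) (K ∙ b) = K ∙ (a ⊗ₜ[K] b) := by
  apply le_antisymm
  · rintro _ ⟨z, rfl⟩
    induction z using TensorProduct.induction_on with
    | zero => simp
    | tmul p q =>
      obtain ⟨s, hs⟩ := Submodule.mem_span_singleton.mp p.2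
      obtain ⟨r, hr⟩ := Submodule.mem_span_singleton.mp q.2
      have : (TensorProduct.map (K ∙ a).subtype (K ∙ b).subtype) (p ⊗ₜ q)
          = (s * r) • (a ⊗ₜ[K] b) := by
        rw [TensorProduct.map_tmul]
        show (p : V) ⊗ₜ[K] (q : W) = _
        rw [← hs, ← hr, TensorProduct.smul_tmul_smul]
      rw [this]
      exact Submodule.smul_mem _ _ (Submodule.mem_span_singleton_self _)
    | add u v hu hv => rw [map_add]; exact Submodule.add_mem _ hu hv
  · rw [Submodule.span_singleton_le_iff_mem]
    exact ⟨⟨a, Submodule.mem_span_singleton_self a⟩ ⊗ₜ ⟨b, Submodule.mem_span_singleton_self b⟩,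
      rfl⟩

lemma span_eq_of_tmul_eq {a v : V} {b w : W} (ha : a ≠ 0) (hb : b ≠ 0)
    (h : a ⊗ₜ[K] b = v ⊗ₜ[K] w) : (K ∙ a) = (K ∙ v) ∧ (K ∙ b) = (K ∙ w) := by
  obtain ⟨φ, hφ⟩ := exists_dual_one K a ha
  obtain ⟨ψ, hψ⟩ := exists_dual_one K b hb
  have h1 := congrArg (TensorProduct.lift
    (((LinearMap.lsmul K W).comp φ) : V →ₗ[K] W →ₗ[K] W)) h
  have h2 := congrArg (TensorProduct.lift
    (((LinearMap.lsmul K V).flip.compl₂ ψ) : V →ₗ[K] W →ₗ[K] V)) h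
  simp only [TensorProduct.lift.tmul, LinearMap.comp_apply, LinearMap.lsmul_apply, hφ, one_smul,
    LinearMap.compl₂_apply, LinearMap.flip_apply, hψ] at h1 h2
  constructor
  · rw [h2]
    have hvne : ψ w ≠ 0 := by rintro h0; rw [h0, zero_smul] at h2; exact ha h2
    exact Submodule.span_singleton_smul_eq (IsUnit.mk0 _ hvne) v
  · rw [h1]
    have hwne : φ v ≠ 0 := by rintro h0; rw [h0, zero_smul] at h1; exact hb h1
    exact Submodule.span_singleton_smul_eq (IsUnit.mk0 _ hwne) w

lemma isCompl_span_of_li {a b : V} (hdim : Module.finrank K V = 2)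
    (hli : LinearIndependent K ![a, b]) : IsCompl (K ∙ a) (K ∙ b) := by
  constructor
  · rw [Submodule.disjoint_def]
    intro z hza hzb
    obtain ⟨s, rfl⟩ := Submodule.mem_span_singleton.mp hza
    obtain ⟨r, hr⟩ := Submodule.mem_span_singleton.mp hzb
    have : s • a + (-r) • b = 0 := by rw [neg_smul, ← hr]; abel
    obtain ⟨hs, -⟩ := LinearIndependent.pair_iff.mp hli s (-r) this
    rw [hs, zero_smul]
  · rw [codisjoint_iff]
    have hcard : Fintype.card (Fin 2) = Module.finrank K V := by simp [hdim]
    have htop := hli.span_eq_top_of_card_eq_finrank hcard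
    have hrange : Set.range ![a, b] = {a, b} := by
      ext z; simp [Fin.exists_fin_two, or_comm]
    rw [hrange] at htop
    rw [← htop, Submodule.span_insert]

lemma submodule_rank_one {p : Submodule K V} (hp : Module.finrank K p = 1) :
    ∃ v : V, v ≠ 0 ∧ p = K ∙ v := by
  obtain ⟨v, hv0, hv⟩ := finrank_eq_one_iff'.mp hp
  refine ⟨(v : V), fun h => hv0 (Subtype.ext h), ?_⟩
  apply le_antisymm
  · intro z hz
    obtain ⟨c, hc⟩ := hv ⟨z, hz⟩
    exact Submodule.mem_span_singleton.mpr ⟨c, congrArg Subtype.val hc⟩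
  · rw [Submodule.span_singleton_le_iff_mem]; exact v.2

lemma li_of_wedge2_ne_zero {a b : V} (h : wedge2 (K := K) a b ≠ 0) :
    LinearIndependent K ![a, b] := by
  rw [LinearIndependent.pair_iff]
  intro s t hst
  constructor
  · have h1 : wedge2 (K := K) (s • a + t • b) b = 0 := by rw [hst, wedge2_zero_left]
    rw [wedge2_add_left, wedge2_smul_left, wedge2_smul_left, wedge2_self, smul_zero,
      add_zero] at h1
    rcases smul_eq_zero.mp h1 with h' | h'
    · exact h'
    · exact absurd h' h
  · have h1 : wedge2 (K := K) a (s • a + t • b) = 0 := by rw [hst, wedge2_zero_right]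
    rw [wedge2_add_right, wedge2_smul_right, wedge2_smul_right, wedge2_self, smul_zero,
      zero_add] at h1
    rcases smul_eq_zero.mp h1 with h' | h'
    · exact h'
    · exact absurd h' h

lemma wedge2_ne_zero_of_li {a b : V} (hdim : Module.finrank K V = 2)
    (hli : LinearIndependent K ![a, b]) : wedge2 (K := K) a b ≠ 0 := by
  have hcard : Fintype.card (Fin 2) = Module.finrank K V := by simp [hdim]
  have g := basisOfLinearIndependentOfCardEqFinrank hli hcard
  have hg : ⇑(basisOfLinearIndependentOfCardEqFinrank hli hcard) = ![a, b] :=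
    coe_basisOfLinearIndependentOfCardEqFinrank hli hcard
  have := wedge2_basis_ne_zero (basisOfLinearIndependentOfCardEqFinrank hli hcard)
  rwa [hg] at this
  
lemma tensor_decomp (e : Module.Basis (Fin 2) K V) (x : V ⊗[K] W) :
    ∃ y0 y1 : W, x = e 0 ⊗ₜ y0 + e 1 ⊗ₜ y1 := by
  induction x using TensorProduct.induction_on with
  | zero => exact ⟨0, 0, by simp⟩
  | tmul v w =>
    refine ⟨e.repr v 0 • w, e.repr v 1 • w, ?_⟩
    have hv : v = e.repr v 0 • e 0 + e.repr v 1 • e 1 := by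
      have := e.sum_repr v
      rw [Fin.sum_univ_two] at this
      exact this.symm
    conv_lhs => rw [hv]
    rw [add_tmul, smul_tmul, smul_tmul]
  | add u v hu hv =>
    obtain ⟨a0, a1, rfl⟩ := hu
    obtain ⟨b0, b1, rfl⟩ := hv
    exact ⟨a0 + b0, a1 + b1, by rw [tmul_add, tmul_add]; abel⟩

section Simple

variable {K V₁ V₂ : Type*} [Field K]
  [AddCommGroup V₁] [Module K V₁] [AddCommGroup V₂] [Module K V₂]
  [FiniteDimensional K V₁] [FiniteDimensional K V₂]

lemma simple_of_isotropic (hchar : (2 : K) ≠ 0)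
    (h₁ : Module.finrank K V₁ = 2) (h₂ : Module.finrank K V₂ = 2)
    (β : (V₁ ⊗[K] V₂) →ₗ[K] (V₁ ⊗[K] V₂) →ₗ[K] ((⋀[K]^2 V₁) ⊗[K] (⋀[K]^2 V₂)))
    (hβ : ∀ (v₁ w₁ : V₁) (v₂ w₂ : V₂),
      β (v₁ ⊗ₜ v₂) (w₁ ⊗ₜ w₂) = wedge2 v₁ w₁ ⊗ₜ wedge2 v₂ w₂)
    (x : V₁ ⊗[K] V₂) (hx : β x x = 0) : ∃ v w, x = v ⊗ₜ[K] w := by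
  set e := Module.finBasisOfFinrankEq K V₁ h₁ with he
  obtain ⟨y0, y1, rfl⟩ := tensor_decomp e x
  have hcomp : β (e 0 ⊗ₜ y0 + e 1 ⊗ₜ y1) (e 0 ⊗ₜ y0 + e 1 ⊗ₜ y1)
      = wedge2 (e 0) (e 1) ⊗ₜ wedge2 y0 y1 + wedge2 (e 0) (e 1) ⊗ₜ wedge2 y0 y1 := by
    have hflip : wedge2 (K := K) (e 1) (e 0) ⊗ₜ[K] wedge2 (K := K) y1 y0
        = wedge2 (K := K) (e 0) (e 1) ⊗ₜ[K] wedge2 (K := K) y0 y1 := by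
      rw [wedge2_anticomm (e 0) (e 1), wedge2_anticomm y0 y1, neg_tmul, tmul_neg]
      abel
    simp only [map_add, LinearMap.add_apply, hβ]
    rw [hflip]
    simp only [wedge2_self, zero_tmul, tmul_zero]
    abel
  rw [hcomp] at hx
  have hW : wedge2 (K := K) (e 0) (e 1) ⊗ₜ[K] wedge2 (K := K) y0 y1 = 0 := by
    have h2 : (2 : K) • (wedge2 (K := K) (e 0) (e 1) ⊗ₜ[K] wedge2 (K := K) y0 y1) = 0 := by
      rw [two_smul]; exact hx
    rcases smul_eq_zero.mp h2 with h | h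
    · exact absurd h hchar
    · exact h
  have hy : wedge2 (K := K) y0 y1 = 0 := by
    by_contra hne
    exact tmul_ne_zero' (wedge2_basis_ne_zero e) hne hW
  by_cases hy0 : y0 = 0
  · exact ⟨e 1, y1, by rw [hy0, tmul_zero, zero_add]⟩
  · have hmu : ∃ μ : K, μ • y0 = y1 := by
      by_contra hno
      push_neg at hno
      have hli : LinearIndependent K ![y0, y1] :=
        (LinearIndependent.pair_iff' hy0).mpr hno
      exact wedge2_ne_zero_of_li h₂ hli hy
    obtain ⟨μ, hmu⟩ := hmu
    refine ⟨e 0 + μ • e 1, y0, ?_⟩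
    rw [add_tmul, smul_tmul, hmu]

end Simple

end Helpers

/-- Sublemma of Section 6.1.1: let `K` be a field of characteristic ≠ 2, `B`, `B'`
one-dimensional `K`-vector spaces, `V₁`, `V₂` two-dimensional `K`-vector spaces,
`ι : B ⊗ B' ≃ ⋀²V₁ ⊗ ⋀²V₂` a fixed isomorphism and `β` the canonical `⋀²V₁ ⊗ ⋀²V₂`-valued
bilinear form on `V₁ ⊗ V₂`.  If `t : B ⊕ B' → V₁ ⊗ V₂` is a linear map with
`β (t b) (t b) = 0`, `β (t b') (t b') = 0` and `β (t b) (t b') = ι (b ⊗ b')`, then there are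
unique one-dimensional subspaces `U₁, U₁' ⊆ V₁` with `V₁ = U₁ ⊕ U₁'` and unique one-dimensional
subspaces `U₂, U₂' ⊆ V₂` with `V₂ = U₂ ⊕ U₂'` such that `t(B) = U₁ ⊗ U₂` and `t(B') = U₁' ⊗ U₂'`;
moreover `t` restricts to isomorphisms `B ≅ U₁ ⊗ U₂` and `B' ≅ U₁' ⊗ U₂'`, i.e. `t` is injective
on each summand. -/
theorem sublemma_nice
    (K B B' V₁ V₂ : Type*) [Field K] (hchar : (2 : K) ≠ 0)
    [AddCommGroup B] [Module K B] [AddCommGroup B'] [Module K B']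
    [AddCommGroup V₁] [Module K V₁] [AddCommGroup V₂] [Module K V₂]
    [FiniteDimensional K B] [FiniteDimensional K B']
    [FiniteDimensional K V₁] [FiniteDimensional K V₂]
    (hB : Module.finrank K B = 1) (hB' : Module.finrank K B' = 1)
    (h₁ : Module.finrank K V₁ = 2) (h₂ : Module.finrank K V₂ = 2)
    (β : (V₁ ⊗[K] V₂) →ₗ[K] (V₁ ⊗[K] V₂) →ₗ[K] ((⋀[K]^2 V₁) ⊗[K] (⋀[K]^2 V₂)))
    (hβ : ∀ (v₁ w₁ : V₁) (v₂ w₂ : V₂),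
      β (v₁ ⊗ₜ v₂) (w₁ ⊗ₜ w₂) = wedge2 v₁ w₁ ⊗ₜ wedge2 v₂ w₂)
    (ι : (B ⊗[K] B') ≃ₗ[K] ((⋀[K]^2 V₁) ⊗[K] (⋀[K]^2 V₂)))
    (t : (B × B') →ₗ[K] (V₁ ⊗[K] V₂))
    (ht1 : ∀ b : B, β (t (b, 0)) (t (b, 0)) = 0)
    (ht2 : ∀ b' : B', β (t (0, b')) (t (0, b')) = 0)
    (ht3 : ∀ (b : B) (b' : B'), β (t (b, 0)) (t (0, b')) = ι (b ⊗ₜ b')) :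
    (∃! U : Submodule K V₁ × Submodule K V₁ × Submodule K V₂ × Submodule K V₂,
      Module.finrank K U.1 = 1 ∧ Module.finrank K U.2.1 = 1 ∧ IsCompl U.1 U.2.1 ∧
      Module.finrank K U.2.2.1 = 1 ∧ Module.finrank K U.2.2.2 = 1 ∧ IsCompl U.2.2.1 U.2.2.2 ∧
      LinearMap.range (t ∘ₗ LinearMap.inl K B B') = tensorSub U.1 U.2.2.1 ∧
      LinearMap.range (t ∘ₗ LinearMap.inr K B B') = tensorSub U.2.1 U.2.2.2) ∧
    Function.Injective (t ∘ₗ LinearMap.inl K B B') ∧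
    Function.Injective (t ∘ₗ LinearMap.inr K B B') := by
  obtain ⟨b₀, hb₀, hBspan⟩ := finrank_eq_one_iff'.mp hB
  obtain ⟨b₀', hb₀', hB'span⟩ := finrank_eq_one_iff'.mp hB'
  set x := t (b₀, 0) with hxdef
  set y := t (0, b₀') with hydef
  have hβxy0 : β x y ≠ 0 := by
    rw [ht3 b₀ b₀']
    intro h
    exact tmul_ne_zero' hb₀ hb₀' (ι.map_eq_zero_iff.mp h)
  have hxne : x ≠ 0 := by
    intro h; apply hβxy0; rw [h, map_zero, LinearMap.zero_apply]
  have hyne : y ≠ 0 := by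
    intro h; apply hβxy0; rw [h, map_zero]
  obtain ⟨u₁, u₂, hx⟩ := simple_of_isotropic hchar h₁ h₂ β hβ x (ht1 b₀)
  obtain ⟨u₁', u₂', hy⟩ := simple_of_isotropic hchar h₁ h₂ β hβ y (ht2 b₀')
  have hβval : β x y = wedge2 u₁ u₁' ⊗ₜ wedge2 u₂ u₂' := by rw [hx, hy, hβ]
  have hw1 : wedge2 (K := K) u₁ u₁' ≠ 0 := by
    intro h; apply hβxy0; rw [hβval, h, zero_tmul]
  have hw2 : wedge2 (K := K) u₂ u₂' ≠ 0 := by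
    intro h; apply hβxy0; rw [hβval, h, tmul_zero]
  have li1 := li_of_wedge2_ne_zero hw1
  have li2 := li_of_wedge2_ne_zero hw2
  have hu₁ : u₁ ≠ 0 := fun h => hw1 (by rw [h, wedge2_zero_left])
  have hu₁' : u₁' ≠ 0 := fun h => hw1 (by rw [h, wedge2_zero_right])
  have hu₂ : u₂ ≠ 0 := fun h => hw2 (by rw [h, wedge2_zero_left])
  have hu₂' : u₂' ≠ 0 := fun h => hw2 (by rw [h, wedge2_zero_right])
  have hBtop : (K ∙ b₀) = (⊤ : Submodule K B) := by
    rw [eq_top_iff]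
    intro w _
    obtain ⟨c, hc⟩ := hBspan w
    exact Submodule.mem_span_singleton.mpr ⟨c, hc⟩
  have hB'top : (K ∙ b₀') = (⊤ : Submodule K B') := by
    rw [eq_top_iff]
    intro w _
    obtain ⟨c, hc⟩ := hB'span w
    exact Submodule.mem_span_singleton.mpr ⟨c, hc⟩
  have hrangeL : LinearMap.range (t ∘ₗ LinearMap.inl K B B') = K ∙ (u₁ ⊗ₜ[K] u₂) := by
    rw [LinearMap.range_eq_map, ← hBtop, LinearMap.map_span, Set.image_singleton]
    have : (t ∘ₗ LinearMap.inl K B B') b₀ = x := rfl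
    rw [this, hx]
  have hrangeR : LinearMap.range (t ∘ₗ LinearMap.inr K B B') = K ∙ (u₁' ⊗ₜ[K] u₂') := by
    rw [LinearMap.range_eq_map, ← hB'top, LinearMap.map_span, Set.image_singleton]
    have : (t ∘ₗ LinearMap.inr K B B') b₀' = y := rfl
    rw [this, hy]
  refine ⟨⟨(K ∙ u₁, K ∙ u₁', K ∙ u₂, K ∙ u₂'),
    ⟨finrank_span_singleton hu₁, finrank_span_singleton hu₁', isCompl_span_of_li h₁ li1,
     finrank_span_singleton hu₂, finrank_span_singleton hu₂', isCompl_span_of_li h₂ li2,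
     by rw [hrangeL, tensorSub_span], by rw [hrangeR, tensorSub_span]⟩, ?_⟩, ?_, ?_⟩
  · rintro ⟨W₁, W₁', W₂, W₂'⟩ ⟨d1, d2, -, d3, d4, -, r1, r2⟩
    obtain ⟨w₁, hw₁0, rfl⟩ := submodule_rank_one d1
    obtain ⟨w₁', hw₁'0, rfl⟩ := submodule_rank_one d2
    obtain ⟨w₂, hw₂0, rfl⟩ := submodule_rank_one d3
    obtain ⟨w₂', hw₂'0, rfl⟩ := submodule_rank_one d4
    rw [hrangeL, tensorSub_span] at r1
    rw [hrangeR, tensorSub_span] at r2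
    have key : ∀ (a : V₁) (b : V₂) (v : V₁) (w : V₂), a ≠ 0 → b ≠ 0 → v ≠ 0 → w ≠ 0 →
        (K ∙ (v ⊗ₜ[K] w)) = (K ∙ (a ⊗ₜ[K] b)) → (K ∙ a) = (K ∙ v) ∧ (K ∙ b) = (K ∙ w) := by
      intro a b v w ha hb hv hw hspan
      have hmem : v ⊗ₜ[K] w ∈ (K ∙ (a ⊗ₜ[K] b)) := by
        rw [← hspan]; exact Submodule.mem_span_singleton_self _
      obtain ⟨c, hc⟩ := Submodule.mem_span_singleton.mp hmem
      have hc0 : c ≠ 0 := by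
        intro h; rw [h, zero_smul] at hc; exact tmul_ne_zero' hv hw hc.symm
      have heq : (c • a) ⊗ₜ[K] b = v ⊗ₜ[K] w := by rw [← smul_tmul', hc]
      obtain ⟨e1, e2⟩ := span_eq_of_tmul_eq (smul_ne_zero hc0 ha) hb heq
      refine ⟨?_, e2⟩
      rw [← Submodule.span_singleton_smul_eq (IsUnit.mk0 c hc0) a, e1]
    obtain ⟨e1, e2⟩ := key u₁ u₂ w₁ w₂ hu₁ hu₂ hw₁0 hw₂0 r1.symm
    obtain ⟨e1', e2'⟩ := key u₁' u₂' w₁' w₂' hu₁' hu₂' hw₁'0 hw₂'0 r2.symm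
    simp only [Prod.mk.injEq]
    exact ⟨e1.symm, e1'.symm, e2.symm, e2'.symm⟩
  · intro a b hab
    have h0 : (t ∘ₗ LinearMap.inl K B B') (a - b) = 0 := by
      rw [map_sub, hab, sub_self]
    have h1 : t (a - b, 0) = 0 := h0
    obtain ⟨s, hs⟩ := hBspan (a - b)
    have h2 : t (s • b₀, (0 : B')) = s • x := by
      rw [hxdef, ← map_smul]
      congr 1
      rw [Prod.smul_mk, smul_zero]
    rw [← hs, h2] at h1
    rcases smul_eq_zero.mp h1 with h | h
    · rw [h, zero_smul] at hs
      exact sub_eq_zero.mp hs.symm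
    · exact absurd h hxne
  · intro a b hab
    have h0 : (t ∘ₗ LinearMap.inr K B B') (a - b) = 0 := by
      rw [map_sub, hab, sub_self]
    have h1 : t ((0 : B), a - b) = 0 := h0
    obtain ⟨s, hs⟩ := hB'span (a - b)
    have h2 : t ((0 : B), s • b₀') = s • y := by
      rw [hydef, ← map_smul]
      congr 1
      rw [Prod.smul_mk, smul_zero]
    rw [← hs, h2] at h1
    rcases smul_eq_zero.mp h1 with h | h
    · rw [h, zero_smul] at hs
      exact sub_eq_zero.mp hs.symm
    · exact absurd h hyne
end

section
/- Let K be a field and let V₁ and V₂ be two-dimensional K-vector spaces. For all linear endomorphisms g₁ of V₁ and g₂ of V₂ and all x, y ∈ V₁ ⊗ V₂ one has β((g₁ ⊗ g₂)(x), (g₁ ⊗ g₂)(y)) = (det g₁ · det g₂) • β(x, y) in ⋀²V₁ ⊗ ⋀²V₂. In particular, for invertible g₁, g₂ the automorphism g₁ ⊗ g₂ of V₁ ⊗ V₂ is an orthogonal similitude of β with similitude factor det g₁ · det g₂. -/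
open TensorProduct

set_option synthInstance.maxHeartbeats 1000000
set_option maxHeartbeats 1000000

/-- Any alternating map of degree equal to the finrank factors through the determinant. -/
theorem alt_eq_det_smul {K V N : Type*} [Field K] [AddCommGroup V] [Module K V]
    [AddCommGroup N] [Module K N] (b : Module.Basis (Fin 2) K V)
    (f : V [⋀^Fin 2]→ₗ[K] N) : f = b.det.smulRight (f b) := by
  refine Module.Basis.ext_alternating b fun i h => ?_
  let σ : Equiv.Perm (Fin 2) := Equiv.ofBijective i (Finite.injective_iff_bijective.1 h)
  change f (b ∘ σ) = (b.det.smulRight (f b)) (b ∘ σ)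
  simp [AlternatingMap.map_perm, Module.Basis.det_self]

theorem wedge2_map {K V : Type*} [Field K] [AddCommGroup V] [Module K V]
    [FiniteDimensional K V] (h : Module.finrank K V = 2) (g : V →ₗ[K] V) (v w : V) :
    wedge2 (K := K) (g v) (g w) = LinearMap.det g • wedge2 (K := K) v w := by
  let b : Module.Basis (Fin 2) K V := Module.finBasisOfFinrankEq K V h
  apply Subtype.ext
  show ExteriorAlgebra.ιMulti K 2 ![g v, g w]
      = LinearMap.det g • ExteriorAlgebra.ιMulti K 2 ![v, w]
  have key : ∀ u : Fin 2 → V, ExteriorAlgebra.ιMulti K 2 u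
      = b.det u • ExteriorAlgebra.ιMulti K 2 b := fun u => by
    conv_lhs => rw [alt_eq_det_smul b (ExteriorAlgebra.ιMulti K 2)]
    rfl
  have hv : ![g v, g w] = g ∘ ![v, w] := by
    ext i; fin_cases i <;> rfl
  rw [key ![g v, g w], key ![v, w], hv, Module.Basis.det_comp, mul_smul]

/-- for `V₁`, `V₂` two-dimensional over a field `K`, endomorphisms `g₁` of `V₁` and
`g₂` of `V₂`, and the canonical bilinear form `β` on `V₁ ⊗ V₂` (determined on simple tensors by
`β (v₁ ⊗ v₂) (w₁ ⊗ w₂) = (v₁ ∧ w₁) ⊗ (v₂ ∧ w₂)`, with values in `⋀²V₁ ⊗ ⋀²V₂`), one has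
`β ((g₁ ⊗ g₂) x) ((g₁ ⊗ g₂) y) = (det g₁ * det g₂) • β x y`; in particular, for invertible
`g₁`, `g₂`, the map `g₁ ⊗ g₂` is an orthogonal similitude of `β` with factor `det g₁ * det g₂`. -/
theorem canonical_form_similitude
    (K V₁ V₂ : Type*) [Field K]
    [AddCommGroup V₁] [Module K V₁] [AddCommGroup V₂] [Module K V₂]
    [FiniteDimensional K V₁] [FiniteDimensional K V₂]
    (h₁ : Module.finrank K V₁ = 2) (h₂ : Module.finrank K V₂ = 2)
    (β : (V₁ ⊗[K] V₂) →ₗ[K] (V₁ ⊗[K] V₂) →ₗ[K] ((⋀[K]^2 V₁) ⊗[K] (⋀[K]^2 V₂)))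
    (hβ : ∀ (v₁ w₁ : V₁) (v₂ w₂ : V₂),
      β (v₁ ⊗ₜ v₂) (w₁ ⊗ₜ w₂) = wedge2 v₁ w₁ ⊗ₜ wedge2 v₂ w₂)
    (g₁ : V₁ →ₗ[K] V₁) (g₂ : V₂ →ₗ[K] V₂) (x y : V₁ ⊗[K] V₂) :
    β (TensorProduct.map g₁ g₂ x) (TensorProduct.map g₁ g₂ y)
      = (LinearMap.det g₁ * LinearMap.det g₂) • β x y := by
  induction x using TensorProduct.induction_on with
  | zero => simp
  | add a b ha hb => simp only [map_add, LinearMap.add_apply, ha, hb, smul_add]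
  | tmul v₁ v₂ =>
    induction y using TensorProduct.induction_on with
    | zero => simp
    | add a b ha hb => simp only [map_add, ha, hb, smul_add]
    | tmul w₁ w₂ =>
      rw [TensorProduct.map_tmul, TensorProduct.map_tmul, hβ, hβ, wedge2_map h₁,
        wedge2_map h₂, TensorProduct.tmul_smul, TensorProduct.smul_tmul', smul_smul,
        mul_comm (LinearMap.det g₂), TensorProduct.smul_tmul']
end

section
/- Let K be a field and let W be a four-dimensional K-vector space. The bilinear pairing b on ⋀²W with values in the one-dimensional space ⋀⁴W, given by b(ω, η) = ω ∧ η, is symmetric and nondegenerate; moreover, for every linear endomorphism g of W and all ω, η ∈ ⋀²W one has (⋀²g)(ω) ∧ (⋀²g)(η) = (det g) • (ω ∧ η). In particular, for each g ∈ GL(W) the automorphism ⋀²g of ⋀²W is an orthogonal similitude of b with similitude factor det g. -/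
open TensorProduct

set_option synthInstance.maxHeartbeats 1000000
set_option maxHeartbeats 1000000

open ExteriorAlgebra

section Aux

variable {K W : Type*} [Field K] [AddCommGroup W] [Module K W]

private lemma ia_swap (x y : W) :
    ι K x * ι K y = -(ι K y * ι K x) :=
  eq_neg_of_add_eq_zero_left (ι_add_mul_swap x y)

private lemma gen_comm (a b c d : W) :
    (ι K a * ι K b) * (ι K c * ι K d) = (ι K c * ι K d) * (ι K a * ι K b) := by
  have h : ∀ x y : W, ι K x * ι K y = -(ι K y * ι K x) := fun x y => ia_swap x y
  have h3 : ∀ (x y : W) (z : ExteriorAlgebra K W),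
      ι K x * (ι K y * z) = -(ι K y * (ι K x * z)) := by
    intro x y z
    rw [← mul_assoc, ← mul_assoc, h x y, neg_mul]
  simp only [mul_assoc]
  rw [h3 a b]
  rw [h3 a c]
  rw [h a d]
  simp only [mul_neg, neg_neg, neg_mul]
  rw [h3 b c]
  simp only [mul_neg, neg_neg, neg_mul]
  rw [h3 b d]
  rw [h b a]
  simp only [mul_neg, neg_neg, neg_mul]

private lemma iM2 (v : Fin 2 → W) :
    (ιMulti K 2 v : ExteriorAlgebra K W) = ι K (v 0) * ι K (v 1) := by
  simp [ιMulti_apply, List.ofFn_succ]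
  rfl

private lemma mul4 (a b c d : W) :
    (ι K a * ι K b) * (ι K c * ι K d)
      = (ιMulti K 4 ![a, b, c, d] : ExteriorAlgebra K W) := by
  simp [ιMulti_apply, List.ofFn_succ, mul_assoc]

private lemma iM4_eq (e : Module.Basis (Fin 4) K W) (w : Fin 4 → W) :
    (ιMulti K 4 w : ExteriorAlgebra K W) = e.det w • ιMulti K 4 ⇑e := by
  rw [← sub_eq_zero, ← Module.forall_dual_apply_eq_zero_iff K]
  intro φ
  set F := φ.compAlternatingMap (ιMulti K 4) with hF
  have h1 : φ (ιMulti K 4 w) = F w := rfl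
  have h2 : φ (ιMulti K 4 ⇑e) = F ⇑e := rfl
  have h3 : F w = F ⇑e • e.det w := by
    conv_lhs => rw [AlternatingMap.eq_smul_basis_det e F]
    simp
  rw [map_sub, map_smul, h1, h2, h3]
  simp [smul_eq_mul, mul_comm]

private lemma iM4_map (e : Module.Basis (Fin 4) K W) (g : W →ₗ[K] W) (w : Fin 4 → W) :
    (ιMulti K 4 (g ∘ w) : ExteriorAlgebra K W) = LinearMap.det g • ιMulti K 4 w := by
  rw [iM4_eq e (g ∘ w), iM4_eq e w, Module.Basis.det_comp, mul_smul]

private lemma T_ne (e : Module.Basis (Fin 4) K W) :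
    (ιMulti K 4 ⇑e : ExteriorAlgebra K W) ≠ 0 := by
  intro h
  have h2 : liftAlternating (R := K)
      (Function.update (fun i => (0 : W [⋀^Fin i]→ₗ[K] K)) 4 e.det)
      (ιMulti K 4 ⇑e) = 1 := by
    rw [liftAlternating_apply_ιMulti, Function.update_self, Module.Basis.det_self]
  rw [h, map_zero] at h2
  exact zero_ne_one h2

/-- complement pair -/
private def cpl : Fin 4 × Fin 4 → Fin 4 × Fin 4 := fun p =>
  if p = (0,1) then (2,3) else if p = (0,2) then (1,3) else if p = (0,3) then (1,2)
  else if p = (1,2) then (0,3) else if p = (1,3) then (0,2) else (0,1)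

private lemma D1 : ∀ p p' : Fin 4 × Fin 4, p.1 < p.2 → p'.1 < p'.2 → p' ≠ p →
    ¬ Function.Injective ![p'.1, p'.2, (cpl p).1, (cpl p).2] := by decide

private lemma D2 : ∀ p : Fin 4 × Fin 4, p.1 < p.2 →
    Function.Injective ![p.1, p.2, (cpl p).1, (cpl p).2] := by decide

private lemma span2 (e : Module.Basis (Fin 4) K W) (x : ExteriorAlgebra K W)
    (hx : x ∈ ⋀[K]^2 W) :
    x ∈ Submodule.span K (Set.range
      fun q : {p : Fin 4 × Fin 4 // p.1 < p.2} => ι K (e q.1.1) * ι K (e q.1.2)) := by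
  set S := Submodule.span K (Set.range
      fun q : {p : Fin 4 × Fin 4 // p.1 < p.2} => ι K (e q.1.1) * ι K (e q.1.2)) with hS
  have hPm : ∀ i j : Fin 4, ι K (e i) * ι K (e j) ∈ S := by
    intro i j
    rcases lt_trichotomy i j with h | h | h
    · exact Submodule.subset_span ⟨⟨(i, j), h⟩, rfl⟩
    · rw [h, ι_sq_zero]; exact zero_mem _
    · rw [ia_swap]
      exact Submodule.neg_mem _ (Submodule.subset_span ⟨⟨(j, i), h⟩, rfl⟩)
  rw [← ιMulti_span_fixedDegree] at hx
  induction hx using Submodule.span_induction with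
  | mem y hy =>
      obtain ⟨v, rfl⟩ := hy
      rw [iM2]
      have key : ι K (v 0) * ι K (v 1) = ∑ i : Fin 4, ∑ j : Fin 4,
          (e.repr (v 1) j * e.repr (v 0) i) • (ι K (e i) * ι K (e j)) := by
        conv_lhs => rw [← Module.Basis.sum_repr e (v 0), ← Module.Basis.sum_repr e (v 1)]
        rw [map_sum, map_sum, Finset.sum_mul_sum]
        simp only [map_smul, smul_mul_assoc, mul_smul_comm, smul_smul]
      rw [key]
      exact Submodule.sum_mem _ fun i _ => Submodule.sum_mem _ fun j _ =>
        Submodule.smul_mem _ _ (hPm i j)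
  | zero => exact zero_mem _
  | add x y _ _ ihx ihy => exact add_mem ihx ihy
  | smul a x _ ih => exact Submodule.smul_mem _ _ ih

end Aux

/-- for a four-dimensional vector space `W` over a field `K`, the pairing
`b(ω, η) = ω ∧ η` on `⋀²W` with values in `⋀⁴W` (computed as a product in the exterior
algebra) is symmetric and nondegenerate, and for every endomorphism `g` of `W`,
`(⋀²g)(ω) ∧ (⋀²g)(η) = (det g) • (ω ∧ η)`; in particular each `⋀²g`, `g ∈ GL(W)`, is an
orthogonal similitude of `b` with similitude factor `det g`. -/
theorem wedge_pairing_on_second_exterior_power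
    (K W : Type*) [Field K]
    [AddCommGroup W] [Module K W] [FiniteDimensional K W]
    (hW : Module.finrank K W = 4) :
    (∀ ω η : ⋀[K]^2 W,
      (ω : ExteriorAlgebra K W) * (η : ExteriorAlgebra K W)
        = (η : ExteriorAlgebra K W) * (ω : ExteriorAlgebra K W)) ∧
    (∀ ω : ⋀[K]^2 W,
      (∀ η : ⋀[K]^2 W, (ω : ExteriorAlgebra K W) * (η : ExteriorAlgebra K W) = 0) → ω = 0) ∧
    (∀ (g : W →ₗ[K] W) (ω η : ⋀[K]^2 W),
      ExteriorAlgebra.map g (ω : ExteriorAlgebra K W)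
          * ExteriorAlgebra.map g (η : ExteriorAlgebra K W)
        = LinearMap.det g • ((ω : ExteriorAlgebra K W) * (η : ExteriorAlgebra K W))) := by
  have e : Module.Basis (Fin 4) K W := Module.finBasisOfFinrankEq K W hW
  refine ⟨?_, ?_, ?_⟩
  · -- symmetry
    intro ω η
    have comm : ∀ x ∈ ⋀[K]^2 W, ∀ y ∈ ⋀[K]^2 W, x * y = y * x := by
      intro x hx y hy
      rw [← ιMulti_span_fixedDegree] at hx hy
      induction hx, hy using Submodule.span_induction₂ with
      | mem_mem x y hx hy =>
          obtain ⟨v, rfl⟩ := hx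
          obtain ⟨w, rfl⟩ := hy
          rw [iM2, iM2]
          exact gen_comm _ _ _ _
      | zero_left y hy => simp
      | zero_right x hx => simp
      | add_left x y z _ _ _ ih1 ih2 => rw [add_mul, mul_add, ih1, ih2]
      | add_right x y z _ _ _ ih1 ih2 => rw [mul_add, add_mul, ih1, ih2]
      | smul_left r x y _ _ ih => rw [smul_mul_assoc, mul_smul_comm, ih]
      | smul_right r x y _ _ ih => rw [smul_mul_assoc, mul_smul_comm, ih]
    exact comm _ ω.2 _ η.2
  · -- nondegeneracy
    intro ω hω
    have hspan := span2 e (ω : ExteriorAlgebra K W) ω.2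
    rw [Submodule.mem_span_range_iff_exists_fun] at hspan
    obtain ⟨c, hc⟩ := hspan
    have hc0 : ∀ q : {p : Fin 4 × Fin 4 // p.1 < p.2}, c q = 0 := by
      intro q
      set k := (cpl q.1).1 with hk
      set l := (cpl q.1).2 with hl
      have hmem : ι K (e k) * ι K (e l) ∈ ⋀[K]^2 W := by
        have h := ExteriorAlgebra.ιMulti_range K 2
          (Set.mem_range_self (f := ιMulti K 2) ![e k, e l])
        have h2 : (ιMulti K 2 ![e k, e l] : ExteriorAlgebra K W)
            = ι K (e k) * ι K (e l) := by
          rw [iM2]; simp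
        rwa [h2] at h
      have h0 := hω ⟨_, hmem⟩
      change (ω : ExteriorAlgebra K W) * (ι K (e k) * ι K (e l)) = 0 at h0
      rw [← hc, Finset.sum_mul] at h0
      simp only [smul_mul_assoc] at h0
      have hz : ∀ b ∈ (Finset.univ : Finset {p : Fin 4 × Fin 4 // p.1 < p.2}), b ≠ q →
          c b • ((ι K (e b.1.1) * ι K (e b.1.2)) * (ι K (e k) * ι K (e l))) = 0 := by
        intro b _ hb
        have hni : ¬ Function.Injective ![b.1.1, b.1.2, k, l] :=
          D1 q.1 b.1 q.2 b.2 (fun hbq => hb (Subtype.ext hbq))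
        have hni' : ¬ Function.Injective
            (fun t => e (![b.1.1, b.1.2, k, l] t)) :=
          fun hinj => hni (Function.Injective.of_comp hinj)
        have hv : ![e b.1.1, e b.1.2, e k, e l]
            = fun t => e (![b.1.1, b.1.2, k, l] t) := by
          ext t
          fin_cases t <;> rfl
        rw [mul4, iM4_eq e, hv, AlternatingMap.map_eq_zero_of_not_injective _ _ hni',
          zero_smul, smul_zero]
      rw [Finset.sum_eq_single_of_mem q (Finset.mem_univ q) hz] at h0
      have hinj : Function.Injective ![q.1.1, q.1.2, k, l] := D2 q.1 q.2
      have hv : ![e q.1.1, e q.1.2, e k, e l]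
          = fun t => e (![q.1.1, q.1.2, k, l] t) := by
        ext t
        fin_cases t <;> rfl
      rw [mul4, iM4_eq e, hv] at h0
      have hd : e.det (fun t => e (![q.1.1, q.1.2, k, l] t)) ≠ 0 := by
        have hbij : Function.Bijective ![q.1.1, q.1.2, k, l] :=
          (Finite.injective_iff_bijective).mp hinj
        set σ := Equiv.ofBijective _ hbij with hσ
        have hre : (fun t => e (![q.1.1, q.1.2, k, l] t)) = ⇑(e.reindex σ.symm) := by
          ext t
          simp [Module.Basis.reindex_apply, hσ, Equiv.ofBijective_apply]
        rw [hre]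
        exact (e.isUnit_det _).ne_zero
      rcases smul_eq_zero.mp h0 with h | h
      · exact h
      · rcases smul_eq_zero.mp h with h' | h'
        · exact absurd h' hd
        · exact absurd h' (T_ne e)
    have hco : (ω : ExteriorAlgebra K W) = 0 := by
      rw [← hc]
      simp [hc0]
    exact Subtype.ext (by simpa using hco)
  · -- similitude
    intro g ω η
    rw [← map_mul]
    have hmem : ((ω : ExteriorAlgebra K W) * (η : ExteriorAlgebra K W)) ∈ ⋀[K]^4 W := by
      have h := Submodule.mul_mem_mul ω.2 η.2
      rwa [← pow_add] at h
    have key : ∀ x ∈ ⋀[K]^4 W,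
        ExteriorAlgebra.map g x = LinearMap.det g • x := by
      intro x hx
      rw [← ιMulti_span_fixedDegree] at hx
      induction hx using Submodule.span_induction with
      | mem y hy =>
          obtain ⟨v, rfl⟩ := hy
          rw [map_apply_ιMulti, iM4_map e]
      | zero => simp
      | add x y _ _ ihx ihy => rw [map_add, ihx, ihy, smul_add]
      | smul a x _ ih => rw [map_smul, ih, smul_comm]
    exact key _ hmem
end
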